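/- Suppose S is symmetric and positive definite and let τ be a point of the upper half-plane 𝓗. Then the bilinear form H on M_{g×2}(ℝ) defined by H(α, β) = E(α, β · J_τ⁻¹) is symmetric and positive definite: H(α, β) = H(β, α) for all α, β, and H(α, α) > 0 for every α ≠ 0. (In particular, for τ = i one has H(α, α) = tr(αᵀ S α).) -/

import Mathlib

open Matrix

/-- The standard symplectic `2×2` matrix `J₂ = [[0,1],[-1,0]]`. -/
def J2 : Matrix (Fin 2) (Fin 2) ℝ := !![0, 1; -1, 0]

/-- The bilinear form `E(α,β) = tr(αᵀ S β J₂)` on the space of real `g×2` matrices. -/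
def Eform (g : ℕ) (S : Matrix (Fin g) (Fin g) ℝ) (α β : Matrix (Fin g) (Fin 2) ℝ) : ℝ :=
  (αᵀ * S * β * J2).trace

/-- For `τ` in the upper half-plane, `J_τ = (1/Im τ) • [[-Re τ, |τ|²], [-1, Re τ]]`. -/
noncomputable def Jmat (τ : ℂ) : Matrix (Fin 2) (Fin 2) ℝ :=
  (τ.im)⁻¹ • !![-τ.re, Complex.normSq τ; -1, τ.re]

/-!
Writing `H(α, β) = tr(αᵀ S β K)` with `K = J_τ⁻¹ J₂`, one computes `K = (Im τ)⁻¹ LᵀL` for the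
invertible `L = JmatFactor τ = [[Im τ, 0], [Re τ, 1]]`. Since `S` and `K` are symmetric,
transposing the trace gives the symmetry of `H`. Cycling the trace,
`H(α, α) = (Im τ)⁻¹ tr(γᵀ S γ)` with `γ = αLᵀ ≠ 0`, and `tr(γᵀ S γ)` is the sum of the values of
the quadratic form of `S` on the columns of `γ`, one of which is nonzero. For `τ = i`, `L = 1`.
-/

namespace Matrix

variable {m n R : Type*} [Fintype n]

theorem trace_transpose_mul_mul_mul_comm [Fintype m] [CommSemiring R] {S : Matrix n n R}
    {K : Matrix m m R} (hS : Sᵀ = S) (hK : Kᵀ = K) (α β : Matrix n m R) :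
    (αᵀ * S * β * K).trace = (βᵀ * S * α * K).trace := by
  rw [← trace_transpose]
  simp only [transpose_mul, transpose_transpose, hS, hK, Matrix.mul_assoc]
  rw [trace_mul_comm]
  simp only [Matrix.mul_assoc]

theorem conjTranspose_mul_mul_self_apply_self [NonUnitalSemiring R] [StarRing R]
    (S : Matrix n n R) (γ : Matrix n m R) (j : m) :
    (γᴴ * S * γ) j j = star (γᵀ j) ⬝ᵥ S *ᵥ γᵀ j := by
  rw [mul_apply', dotProduct_mulVec]
  rfl

namespace PosDef

variable [Fintype m] [CommRing R] [PartialOrder R] [StarRing R] [StarOrderedRing R]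
  [IsOrderedCancelAddMonoid R] {S : Matrix n n R}

theorem trace_conjTranspose_mul_mul_self_pos (hS : S.PosDef) {γ : Matrix n m R} (hγ : γ ≠ 0) :
    0 < (γᴴ * S * γ).trace := by
  obtain ⟨j, hj⟩ : ∃ j, γᵀ j ≠ 0 := by
    by_contra! h
    exact hγ (ext fun i j => by simpa using congrFun (h j) i)
  refine Finset.sum_pos' (fun k _ => (hS.posSemidef.conjTranspose_mul_mul_same γ).diag_nonneg)
    ⟨j, Finset.mem_univ _, ?_⟩
  simpa [diag, conjTranspose_mul_mul_self_apply_self] using hS.dotProduct_mulVec_pos hj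

theorem trace_conjTranspose_mul_mul_self_mul_pos [DecidableEq m] (hS : S.PosDef)
    {L : Matrix m m R} (hL : IsUnit L) {α : Matrix n m R} (hα : α ≠ 0) :
    0 < (αᴴ * S * α * (Lᴴ * L)).trace := by
  have hαL : α * Lᴴ ≠ 0 := by
    have := ((isUnit_conjTranspose L).2 hL).invertible
    exact fun h => hα (mul_left_injective_of_invertible Lᴴ (by simpa using h))
  have hcycle : (αᴴ * S * α * (Lᴴ * L)).trace = ((α * Lᴴ)ᴴ * S * (α * Lᴴ)).trace := by
    rw [conjTranspose_mul, conjTranspose_conjTranspose, ← Matrix.mul_assoc, trace_mul_comm]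
    simp only [Matrix.mul_assoc]
  exact hcycle ▸ hS.trace_conjTranspose_mul_mul_self_pos hαL

end PosDef

end Matrix

def JmatFactor (τ : ℂ) : Matrix (Fin 2) (Fin 2) ℝ := !![τ.im, 0; τ.re, 1]

lemma isUnit_JmatFactor {τ : ℂ} (hτ : τ.im ≠ 0) : IsUnit (JmatFactor τ) := by
  simpa [isUnit_iff_isUnit_det, JmatFactor, det_fin_two_of] using hτ

lemma JmatFactor_I : JmatFactor Complex.I = 1 := by
  ext i j
  fin_cases i <;> fin_cases j <;> simp [JmatFactor]

lemma det_Jmat {τ : ℂ} (hτ : τ.im ≠ 0) : (Jmat τ).det = 1 := by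
  rw [Jmat, det_smul, det_fin_two_of, Complex.normSq_apply, Fintype.card_fin]
  field_simp
  ring

lemma inv_Jmat_mul_J2 {τ : ℂ} (hτ : τ.im ≠ 0) :
    (Jmat τ)⁻¹ * J2 = τ.im⁻¹ • ((JmatFactor τ)ᵀ * JmatFactor τ) := by
  have hmul : Jmat τ * (τ.im⁻¹ • ((JmatFactor τ)ᵀ * JmatFactor τ)) = J2 := by
    ext i j
    fin_cases i <;> fin_cases j <;>
      simp [Jmat, JmatFactor, J2, mul_apply, Fin.sum_univ_two, Complex.normSq_apply] <;>
      field_simp <;> ring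
  rw [← hmul, nonsing_inv_mul_cancel_left _ _ (by simp [det_Jmat hτ])]

lemma Eform_mul_right (g : ℕ) (S : Matrix (Fin g) (Fin g) ℝ) (α β : Matrix (Fin g) (Fin 2) ℝ)
    (M : Matrix (Fin 2) (Fin 2) ℝ) :
    Eform g S α (β * M) = (αᵀ * S * β * (M * J2)).trace := by
  simp only [Eform, Matrix.mul_assoc]

theorem Eform_Jmat_posDef_general (g : ℕ) (S : Matrix (Fin g) (Fin g) ℝ)
    (hS : S.PosDef) (τ : ℂ) (hτ : 0 < τ.im) :
    (∀ α β : Matrix (Fin g) (Fin 2) ℝ,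
      Eform g S α (β * (Jmat τ)⁻¹) = Eform g S β (α * (Jmat τ)⁻¹)) ∧
    (∀ α : Matrix (Fin g) (Fin 2) ℝ, α ≠ 0 → 0 < Eform g S α (α * (Jmat τ)⁻¹)) ∧
    (∀ α : Matrix (Fin g) (Fin 2) ℝ,
      Eform g S α (α * (Jmat Complex.I)⁻¹) = (αᵀ * S * α).trace) := by
  simp only [Eform_mul_right]
  rw [inv_Jmat_mul_J2 hτ.ne', inv_Jmat_mul_J2 (by simp), JmatFactor_I]
  refine ⟨fun α β => ?_, fun α hα => ?_, fun α => by simp⟩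
  · refine trace_transpose_mul_mul_mul_comm (by simpa using hS.isHermitian.eq) ?_ α β
    simp [transpose_smul]
  · rw [mul_smul_comm, trace_smul, smul_eq_mul]
    refine mul_pos (inv_pos.2 hτ) ?_
    simpa using hS.trace_conjTranspose_mul_mul_self_mul_pos (isUnit_JmatFactor hτ.ne') hα

/-- If `S` is symmetric positive definite and `τ` lies in the upper half-plane, then
`H(α, β) = E(α, β · J_τ⁻¹)` is a symmetric positive definite bilinear form on `M_{g×2}(ℝ)`;
for `τ = i` one has `H(α, α) = tr(αᵀ S α)`. -/
theorem Eform_Jmat_posDef (g : ℕ) (hg : 1 ≤ g) (S : Matrix (Fin g) (Fin g) ℝ)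
    (hS : S.PosDef) (τ : ℂ) (hτ : 0 < τ.im) :
    (∀ α β : Matrix (Fin g) (Fin 2) ℝ,
      Eform g S α (β * (Jmat τ)⁻¹) = Eform g S β (α * (Jmat τ)⁻¹)) ∧
    (∀ α : Matrix (Fin g) (Fin 2) ℝ, α ≠ 0 → 0 < Eform g S α (α * (Jmat τ)⁻¹)) ∧
    (∀ α : Matrix (Fin g) (Fin 2) ℝ,
      Eform g S α (α * (Jmat Complex.I)⁻¹) = (αᵀ * S * α).trace) :=
  Eform_Jmat_posDef_general g S hS τ hτ
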